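/- Let α:[0,1]→ℝ^d be absolutely continuous. There exists a right-continuous, strictly monotonic function φ̃:[0,1]→[0,1] such that: (i) for every absolutely continuous F:[0,1]→ℝ^k with {t : F'(t) ≠ 0} ⊆ {t : α'(t) ≠ 0}, the composition F∘φ̃ is absolutely continuous (in particular α∘φ̃ is absolutely continuous); (ii) for almost every s, the chain rule (α∘φ̃)'(s) = α'(φ̃(s))·φ̃'(s) holds and |(α∘φ̃)'(s)| = ‖α‖_AC (so α∘φ̃ has constant speed); and (iii) μ_{α∘φ̃} = μ_α, and in particular ‖α∘φ̃‖_AC = ‖α‖_AC. -/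

import Mathlib

open MeasureTheory Set
open scoped RealInnerProductSpace ENNReal NNReal

noncomputable section

/-- Euclidean space `ℝ^d`. -/
abbrev Euc (d : ℕ) : Type := EuclideanSpace ℝ (Fin d)

/-- The unit sphere `S^{d-1}` in `ℝ^d`. -/
abbrev Sph (d : ℕ) : Type := Metric.sphere (0 : Euc d) 1

/-- The antipodal equivalence relation on the sphere. -/
def projRel (d : ℕ) : Setoid (Sph d) where
  r x y := (x : Euc d) = (y : Euc d) ∨ (x : Euc d) = -(y : Euc d)
  iseqv := by
    refine ⟨fun x => Or.inl rfl, ?_, ?_⟩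
    · rintro x y (h | h)
      · exact Or.inl h.symm
      · exact Or.inr (by rw [h, neg_neg])
    · rintro x y z (h1 | h1) (h2 | h2)
      · exact Or.inl (h1.trans h2)
      · exact Or.inr (h1.trans h2)
      · exact Or.inr (by rw [h1, h2])
      · exact Or.inl (by rw [h1, h2, neg_neg])

/-- Real projective space `P^{d-1}`, as the quotient of the sphere identifying
antipodal points. -/
abbrev Proj (d : ℕ) : Type := Quotient (projRel d)

/-- The projection `π : S^{d-1} → P^{d-1}`. -/
def projQ {d : ℕ} (x : Sph d) : Proj d := Quotient.mk (projRel d) x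

/-- The unit vector in the direction of a nonzero vector `v`. -/
def unitize {d : ℕ} (v : Euc d) (hv : v ≠ 0) : Sph d :=
  ⟨‖v‖⁻¹ • v, by
    rw [mem_sphere_zero_iff_norm, norm_smul, norm_inv, norm_norm,
      inv_mul_cancel₀ (norm_ne_zero_iff.mpr hv)]⟩

/-- The degree-1 homogeneous extension `f̂ : ℝ^d → ℝ` of a function
`f : P^{d-1} → ℝ`, determined by `f̂(rξ) = |r| f(π ξ)` for `ξ` on the sphere. -/
def hext {d : ℕ} (f : Proj d → ℝ) (v : Euc d) : ℝ :=
  haveI := Classical.propDecidable (v = 0)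
  if hv : v = 0 then 0 else ‖v‖ * f (projQ (unitize v hv))

/-- `IsACDeriv α g` : the curve `α` is absolutely continuous on `[0,1]`
with (a.e.) derivative `g`, i.e. `α` is the indefinite integral of the
integrable function `g`. -/
def IsACDeriv {V : Type*} [NormedAddCommGroup V] [NormedSpace ℝ V]
    (α g : ℝ → V) : Prop :=
  IntervalIntegrable g volume 0 1 ∧
  ∀ t ∈ Icc (0:ℝ) 1, α t = α 0 + ∫ s in (0:ℝ)..t, g s

/-- `IsCurveMeasure g μ` : `μ` is the measure on projective space associated
(via the Riesz representation) to a curve with derivative `g`; it is the finite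
Borel measure satisfying `∫ f dμ = ∫_0^1 f̂(g t) dt` for all continuous `f`. -/
def IsCurveMeasure {d : ℕ} (g : ℝ → Euc d) (μ : Measure (Proj d)) : Prop :=
  IsFiniteMeasure μ ∧
  ∀ f : Proj d → ℝ, Continuous f → ∫ x, f x ∂μ = ∫ t in (0:ℝ)..1, hext f (g t)

open Filter Topology

/-!
Let `ρ = |α'|` and `L = ∫₀¹ ρ`. The normalized arc length `σ(t) = L⁻¹ ∫₀ᵗ ρ` is a continuous
nondecreasing map of `[0, 1]` onto itself, and `φ̃` is its right-continuous generalized inverse, so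
`σ ∘ φ̃ = id` on `[0, 1]` and `φ̃` is strictly increasing. The key fact is that `φ̃` pushes Lebesgue
measure on `[0, 1]` forward to `(ρ / L) dt`. Hence `∫₀ᵘ (L / ρ(φ̃ s)) G(φ̃ s) ds = ∫₀^{φ̃ u} G` for
every integrable `G` vanishing where `ρ` does, which gives (i), and with `G = f̂ ∘ α'` also (iii).
Since `σ' = ρ / L` almost everywhere (Lebesgue differentiation) and `φ̃` is a local inverse of `σ`,
`φ̃'(s) = L / ρ(φ̃ s)` for almost every `s`, which gives (ii). When `L = 0`, `φ̃ = id` works.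
-/

section ProjectiveSpace

variable {d : ℕ}

/-- `v ↦ v vᵀ`, which embeds `P^{d-1}` into the space of matrices. -/
def outerSq (v : Euc d) : Fin d → Fin d → ℝ := fun i j => v i * v j

lemma continuous_outerSq : Continuous (outerSq (d := d)) := by
  unfold outerSq
  fun_prop

lemma eq_or_eq_neg_of_outerSq_eq {x y : Euc d} (hx : ‖x‖ = 1) (hy : ‖y‖ = 1)
    (h : outerSq x = outerSq y) : x = y ∨ x = -y := by
  have hxy : ∀ i j, x i * x j = y i * y j := fun i j => congrFun (congrFun h i) j
  have hxx : ∑ i, x i * x i = 1 := by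
    have := real_inner_self_eq_norm_sq x
    rw [hx, PiLp.inner_apply] at this
    simpa [sq] using this
  set c := ∑ i, x i * y i
  -- `x = (x xᵀ) x = (y yᵀ) x = ⟪x, y⟫ y`
  have hxc : x = c • y := by
    ext j
    calc x j = ∑ i, x i * (x i * x j) := by
          simp_rw [← mul_assoc, ← Finset.sum_mul, hxx, one_mul]
      _ = ∑ i, x i * (y i * y j) := by simp only [hxy]
      _ = (c • y) j := by simp [c, Finset.sum_mul, mul_assoc]
  have hc : |c| = 1 := by simpa [hxc, norm_smul, hy] using hx
  rcases abs_eq zero_le_one |>.mp hc with hc | hc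
  · exact Or.inl (by rw [hxc, hc, one_smul])
  · exact Or.inr (by rw [hxc, hc, neg_one_smul])

def projEmbed : Proj d → (Fin d → Fin d → ℝ) :=
  Quotient.lift (fun x : Sph d => outerSq (x : Euc d)) (by
    rintro x y (h | h)
    · rw [h]
    · funext i j
      simp [outerSq, h])

lemma continuous_projEmbed : Continuous (projEmbed (d := d)) :=
  continuous_quot_lift _ (continuous_outerSq.comp continuous_subtype_val)

lemma injective_projEmbed : Function.Injective (projEmbed (d := d)) := by
  rintro ⟨x⟩ ⟨y⟩ h
  exact Quotient.sound <| eq_or_eq_neg_of_outerSq_eq (norm_eq_of_mem_sphere x)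
    (norm_eq_of_mem_sphere y) h

lemma isEmbedding_projEmbed : Topology.IsEmbedding (projEmbed (d := d)) :=
  (continuous_projEmbed.isClosedEmbedding injective_projEmbed).isEmbedding

/- With these instances `Quotient.borelSpace` identifies the quotient σ-algebra of `Proj d` with
its Borel σ-algebra, so finite measures on `Proj d` are determined by their integrals of
continuous functions. -/
instance : T2Space (Proj d) := isEmbedding_projEmbed.t2Space

instance : SecondCountableTopology (Proj d) := isEmbedding_projEmbed.secondCountableTopology

instance : TopologicalSpace.PseudoMetrizableSpace (Proj d) :=
  isEmbedding_projEmbed.pseudoMetrizableSpace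

end ProjectiveSpace

section HomogeneousExtension

variable {d : ℕ} {f : Proj d → ℝ}

@[simp] lemma hext_zero : hext f 0 = 0 := by simp [hext]

lemma hext_of_ne_zero {v : Euc d} (hv : v ≠ 0) : hext f v = ‖v‖ * f (projQ (unitize v hv)) :=
  dif_neg hv

lemma unitize_smul {v : Euc d} (hv : v ≠ 0) {c : ℝ} (hc : 0 < c) (hcv : c • v ≠ 0) :
    unitize (c • v) hcv = unitize v hv := by
  ext1
  simp only [unitize, norm_smul, Real.norm_of_nonneg hc.le, mul_inv, smul_smul]
  rw [mul_right_comm, inv_mul_cancel₀ hc.ne', one_mul]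

lemma hext_smul_of_nonneg (v : Euc d) {c : ℝ} (hc : 0 ≤ c) : hext f (c • v) = c * hext f v := by
  rcases hc.eq_or_lt with rfl | hc
  · simp
  by_cases hv : v = 0
  · simp [hv]
  have hcv : c • v ≠ 0 := smul_ne_zero hc.ne' hv
  rw [hext_of_ne_zero hcv, hext_of_ne_zero hv, unitize_smul hv hc hcv, norm_smul,
    Real.norm_of_nonneg hc.le, mul_assoc]

lemma norm_hext_le {C : ℝ} (hC : ∀ p, ‖f p‖ ≤ C) (v : Euc d) : ‖hext f v‖ ≤ C * ‖v‖ := by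
  by_cases hv : v = 0
  · simp [hv]
  rw [hext_of_ne_zero hv, norm_mul, norm_norm, mul_comm]
  exact mul_le_mul_of_nonneg_right (hC _) (norm_nonneg v)

lemma continuous_hext (hf : Continuous f) : Continuous (hext f) := by
  obtain ⟨C, hC⟩ := isCompact_univ.exists_bound_of_continuousOn hf.continuousOn
  refine continuous_iff_continuousAt.2 fun v => ?_
  by_cases hv : v = 0
  · subst hv
    have hlim : Tendsto (fun w : Euc d => C * ‖w‖) (𝓝 0) (𝓝 0) := by
      simpa using (continuous_norm.const_mul C).tendsto (0 : Euc d)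
    rw [ContinuousAt, hext_zero]
    exact squeeze_zero_norm (norm_hext_le fun p => hC p (mem_univ p)) hlim
  have hunit : Continuous fun w : ({0}ᶜ : Set (Euc d)) => unitize w.1 w.2 :=
    ((continuous_subtype_val.norm.inv₀ fun w => norm_ne_zero_iff.2 w.2).smul
      continuous_subtype_val).subtype_mk _
  have hon : ContinuousOn (hext f) {0}ᶜ := by
    rw [continuousOn_iff_continuous_domRestrict]
    convert continuous_subtype_val.norm.mul (hf.comp (continuous_quotient_mk'.comp hunit)) using 1
    funext w
    exact hext_of_ne_zero w.2
  exact hon.continuousAt (isOpen_compl_singleton.mem_nhds hv)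

lemma MeasureTheory.Integrable.hext_comp {X : Type*} [MeasurableSpace X] {μ : Measure X}
    {g : X → Euc d} (hf : Continuous f) (hg : Integrable g μ) :
    Integrable (fun x => hext f (g x)) μ := by
  obtain ⟨C, hC⟩ := isCompact_univ.exists_bound_of_continuousOn hf.continuousOn
  exact (hg.norm.const_mul C).mono' ((continuous_hext hf).comp_aestronglyMeasurable hg.1)
    (ae_of_all _ fun x => norm_hext_le (fun p => hC p (mem_univ p)) (g x))

end HomogeneousExtension

lemma IsCurveMeasure.eq_of_integral_hext_eq {d : ℕ} {g h : ℝ → Euc d} {μ μ' : Measure (Proj d)}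
    (hμ : IsCurveMeasure g μ) (hμ' : IsCurveMeasure h μ')
    (hgh : ∀ f : Proj d → ℝ, Continuous f →
      ∫ t in (0:ℝ)..1, hext f (h t) = ∫ t in (0:ℝ)..1, hext f (g t)) : μ' = μ := by
  have := hμ.1
  have := hμ'.1
  refine ext_of_forall_integral_eq_of_IsFiniteMeasure fun f => ?_
  rw [hμ'.2 f f.continuous, hμ.2 f f.continuous, hgh f f.continuous]

section GeneralizedInverse

variable {σ : ℝ → ℝ}

/-- The right-continuous generalized inverse of `σ : [0, 1] → [0, 1]`. -/
def genInv (σ : ℝ → ℝ) (u : ℝ) : ℝ := sInf ({t ∈ Icc (0:ℝ) 1 | u < σ t} ∪ {1})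

lemma bddBelow_genInv_set (σ : ℝ → ℝ) (u : ℝ) :
    BddBelow ({t ∈ Icc (0:ℝ) 1 | u < σ t} ∪ {1}) :=
  ⟨0, by rintro t (ht | rfl); exacts [ht.1.1, zero_le_one]⟩

lemma genInv_mem_Icc (σ : ℝ → ℝ) (u : ℝ) : genInv σ u ∈ Icc (0:ℝ) 1 :=
  ⟨le_csInf ⟨1, Or.inr rfl⟩ (by rintro t (ht | rfl); exacts [ht.1.1, zero_le_one]),
    csInf_le (bddBelow_genInv_set σ u) (Or.inr rfl)⟩

lemma genInv_le {u a : ℝ} (ha : a ∈ Icc (0:ℝ) 1) (hu : u < σ a) : genInv σ u ≤ a :=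
  csInf_le (bddBelow_genInv_set σ u) (Or.inl ⟨ha, hu⟩)

lemma exists_lt_of_genInv_lt {u b : ℝ} (h : genInv σ u < b) :
    ∃ t ∈ {t ∈ Icc (0:ℝ) 1 | u < σ t} ∪ {1}, t < b :=
  exists_lt_of_csInf_lt ⟨1, Or.inr rfl⟩ h

lemma monotone_genInv (σ : ℝ → ℝ) : Monotone (genInv σ) := fun _ _ huv =>
  csInf_le_csInf (bddBelow_genInv_set σ _) ⟨1, Or.inr rfl⟩
    (union_subset_union_left _ fun _ ht => ⟨ht.1, huv.trans_lt ht.2⟩)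

lemma genInv_eq_one {u : ℝ} (hu : ∀ t ∈ Icc (0:ℝ) 1, σ t ≤ u) : genInv σ u = 1 := by
  have : {t ∈ Icc (0:ℝ) 1 | u < σ t} = ∅ :=
    eq_empty_of_forall_notMem fun t ht => (hu t ht.1).not_gt ht.2
  rw [genInv, this, empty_union, csInf_singleton]

lemma continuousWithinAt_Ici_genInv (σ : ℝ → ℝ) (s : ℝ) :
    ContinuousWithinAt (genInv σ) (Ici s) s := by
  refine tendsto_order.2 ⟨fun a ha => ?_, fun b hb => ?_⟩
  · filter_upwards [self_mem_nhdsWithin] with y hy using ha.trans_le (monotone_genInv σ hy)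
  · obtain ⟨t, ht | rfl, htb⟩ := exists_lt_of_genInv_lt hb
    · filter_upwards [nhdsWithin_le_nhds (gt_mem_nhds ht.2)] with y hy
      exact (genInv_le ht.1 hy).trans_lt htb
    · exact Eventually.of_forall fun y => (genInv_mem_Icc σ y).2.trans_lt htb

lemma apply_genInv (hσ : Continuous σ) (h0 : σ 0 = 0) (h1 : σ 1 = 1) {u : ℝ}
    (hu : u ∈ Icc (0:ℝ) 1) : σ (genInv σ u) = u := by
  have ht₀ := genInv_mem_Icc σ u
  apply le_antisymm
  · -- otherwise, by continuity, some `t < genInv σ u` already satisfies `u < σ t`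
    by_contra! hlt
    have hpos : 0 < genInv σ u := ht₀.1.lt_of_ne fun h => by
      rw [← h, h0] at hlt
      exact hlt.not_ge hu.1
    obtain ⟨t, hut, ht0, htu⟩ := (((hσ.tendsto _).eventually (lt_mem_nhds hlt)).filter_mono
      nhdsWithin_le_nhds |>.and (Ioo_mem_nhdsLT hpos)).exists
    exact (genInv_le ⟨ht0.le, htu.le.trans ht₀.2⟩ hut).not_gt htu
  · -- otherwise `σ < u` on some `[genInv σ u, b)`, which meets the set defining `genInv σ u`
    by_contra! hlt
    obtain ⟨b, hb, hσb⟩ := mem_nhdsGE_iff_exists_Ico_subset.1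
      (nhdsWithin_le_nhds ((hσ.tendsto _).eventually (gt_mem_nhds hlt)))
    obtain ⟨t, ht, htb⟩ := exists_lt_of_genInv_lt hb
    have hσt : σ t < u := hσb ⟨csInf_le (bddBelow_genInv_set σ u) ht, htb⟩
    rcases ht with ht | rfl
    · exact hσt.not_gt ht.2
    · exact (h1 ▸ hσt).not_ge hu.2

lemma strictMonoOn_genInv (hσ : Continuous σ) (hmono : Monotone σ) (h0 : σ 0 = 0)
    (h1 : σ 1 = 1) : StrictMonoOn (genInv σ) (Icc 0 1) := by
  intro u hu v hv huv
  by_contra! h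
  have := hmono h
  rw [apply_genInv hσ h0 h1 hu, apply_genInv hσ h0 h1 hv] at this
  exact this.not_gt huv

lemma hasDerivAt_genInv (hσ : Continuous σ) (h0 : σ 0 = 0) (h1 : σ 1 = 1) {s σ' : ℝ}
    (hs : s ∈ Ioo (0:ℝ) 1) (hc : ContinuousAt (genInv σ) s)
    (hd : HasDerivAt σ σ' (genInv σ s)) (hσ' : σ' ≠ 0) : HasDerivAt (genInv σ) σ'⁻¹ s :=
  hd.of_local_left_inverse hc hσ' <| by
    filter_upwards [Ioo_mem_nhds hs.1 hs.2] with y hy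
    exact apply_genInv hσ h0 h1 (Ioo_subset_Icc_self hy)

end GeneralizedInverse

lemma IsACDeriv.integrableOn {V : Type*} [NormedAddCommGroup V] [NormedSpace ℝ V] {F G : ℝ → V}
    (hF : IsACDeriv F G) : IntegrableOn G (Icc 0 1) :=
  (intervalIntegrable_iff_integrableOn_Icc_of_le zero_le_one).1 hF.1

section ArcLength

open intervalIntegral

variable {ρ : ℝ → ℝ}

def totalLength (ρ : ℝ → ℝ) : ℝ := ∫ t in (0:ℝ)..1, ρ t

def normArcLength (ρ : ℝ → ℝ) (t : ℝ) : ℝ := (∫ u in (0:ℝ)..t, ρ u) / totalLength ρ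

structure IsSpeed (ρ : ℝ → ℝ) : Prop where
  nonneg : ∀ t, 0 ≤ ρ t
  integrable : Integrable ρ
  totalLength_pos : 0 < totalLength ρ

@[simp] lemma normArcLength_zero : normArcLength ρ 0 = 0 := by simp [normArcLength]

namespace IsSpeed

lemma normArcLength_one (h : IsSpeed ρ) : normArcLength ρ 1 = 1 :=
  div_self h.totalLength_pos.ne'

lemma continuous_normArcLength (h : IsSpeed ρ) : Continuous (normArcLength ρ) :=
  (continuous_primitive (fun _ _ => h.integrable.intervalIntegrable) 0).div_const _

lemma monotone_normArcLength (h : IsSpeed ρ) : Monotone (normArcLength ρ) := by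
  intro a b hab
  refine div_le_div_of_nonneg_right ?_ h.totalLength_pos.le
  rw [← integral_add_adjacent_intervals (a := 0) (b := a) (c := b)
    h.integrable.intervalIntegrable h.integrable.intervalIntegrable]
  linarith [integral_nonneg (μ := volume) hab fun t _ => h.nonneg t]

lemma strictMonoOn_genInv (h : IsSpeed ρ) :
    StrictMonoOn (genInv (normArcLength ρ)) (Icc 0 1) :=
  _root_.strictMonoOn_genInv h.continuous_normArcLength h.monotone_normArcLength
    normArcLength_zero h.normArcLength_one

lemma genInv_one (h : IsSpeed ρ) : genInv (normArcLength ρ) 1 = 1 :=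
  genInv_eq_one fun _ ht => h.normArcLength_one ▸ h.monotone_normArcLength ht.2

lemma aemeasurable_density (h : IsSpeed ρ) :
    AEMeasurable (fun t => ENNReal.ofReal (ρ t / totalLength ρ)) (volume.restrict (Icc 0 1)) :=
  (h.integrable.restrict.aemeasurable.div_const _).ennreal_ofReal

lemma toReal_density (h : IsSpeed ρ) (t : ℝ) :
    (ENNReal.ofReal (ρ t / totalLength ρ)).toReal = ρ t / totalLength ρ :=
  ENNReal.toReal_ofReal (div_nonneg (h.nonneg t) h.totalLength_pos.le)

lemma setLIntegral_density_Icc (h : IsSpeed ρ) {a : ℝ} (ha : 0 ≤ a) :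
    ∫⁻ t in Icc 0 a, ENNReal.ofReal (ρ t / totalLength ρ) =
      ENNReal.ofReal (normArcLength ρ a) := by
  rw [← ofReal_integral_eq_lintegral_ofReal (h.integrable.div_const _).integrableOn
    (ae_of_all _ fun t => div_nonneg (h.nonneg t) h.totalLength_pos.le), MeasureTheory.integral_div,
    integral_Icc_eq_integral_Ioc, ← integral_of_le ha, normArcLength]

lemma volume_genInv_preimage_Iic (h : IsSpeed ρ) {a : ℝ} (ha : a ∈ Icc (0:ℝ) 1) :
    volume (genInv (normArcLength ρ) ⁻¹' Iic a ∩ Icc 0 1) =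
      ENNReal.ofReal (normArcLength ρ a) := by
  have hσa : normArcLength ρ a ≤ 1 := h.normArcLength_one ▸ h.monotone_normArcLength ha.2
  apply le_antisymm
  · calc volume (genInv (normArcLength ρ) ⁻¹' Iic a ∩ Icc 0 1)
        ≤ volume (Icc 0 (normArcLength ρ a)) := measure_mono fun s ⟨hs, hs01⟩ => ⟨hs01.1, by
          rw [← apply_genInv h.continuous_normArcLength normArcLength_zero h.normArcLength_one hs01]
          exact h.monotone_normArcLength hs⟩
      _ = ENNReal.ofReal (normArcLength ρ a) := by rw [Real.volume_Icc, sub_zero]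
  · calc ENNReal.ofReal (normArcLength ρ a) = volume (Ico 0 (normArcLength ρ a)) := by
          rw [Real.volume_Ico, sub_zero]
      _ ≤ volume (genInv (normArcLength ρ) ⁻¹' Iic a ∩ Icc 0 1) :=
        measure_mono fun s hs => ⟨genInv_le ha hs.2, hs.1, hs.2.le.trans hσa⟩

lemma map_genInv (h : IsSpeed ρ) :
    (volume.restrict (Icc (0:ℝ) 1)).map (genInv (normArcLength ρ)) =
      (volume.restrict (Icc (0:ℝ) 1)).withDensity
        fun t => ENNReal.ofReal (ρ t / totalLength ρ) := by
  have hmeas := (monotone_genInv (normArcLength ρ)).measurable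
  have : IsFiniteMeasure ((volume.restrict (Icc (0:ℝ) 1)).withDensity
      fun t => ENNReal.ofReal (ρ t / totalLength ρ)) :=
    isFiniteMeasure_withDensity_ofReal (h.integrable.div_const _).restrict.hasFiniteIntegral
  refine Measure.ext_of_Iic _ _ fun a => ?_
  rw [Measure.map_apply hmeas measurableSet_Iic,
    Measure.restrict_apply (hmeas measurableSet_Iic), withDensity_apply _ measurableSet_Iic,
    Measure.restrict_restrict measurableSet_Iic]
  rcases lt_or_ge a 0 with ha | ha
  · have h1 : genInv (normArcLength ρ) ⁻¹' Iic a ∩ Icc 0 1 = ∅ :=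
      eq_empty_of_forall_notMem fun s hs => ha.not_ge ((genInv_mem_Icc _ s).1.trans hs.1)
    have h2 : Iic a ∩ Icc (0:ℝ) 1 = ∅ :=
      eq_empty_of_forall_notMem fun s hs => ha.not_ge (hs.2.1.trans hs.1)
    simp [h1, h2]
  · have h1 : genInv (normArcLength ρ) ⁻¹' Iic a ∩ Icc 0 1 =
        genInv (normArcLength ρ) ⁻¹' Iic (min a 1) ∩ Icc 0 1 := by
      ext s
      simp [(genInv_mem_Icc _ s).2]
    have h2 : Iic a ∩ Icc (0:ℝ) 1 = Icc 0 (min a 1) := by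
      ext t
      simp only [mem_inter_iff, mem_Iic, mem_Icc, le_min_iff]
      tauto
    rw [h1, h2, h.volume_genInv_preimage_Iic ⟨le_min ha zero_le_one, min_le_right _ _⟩,
      h.setLIntegral_density_Icc (le_min ha zero_le_one)]

lemma map_genInv_restrict_Icc (h : IsSpeed ρ) {u : ℝ} (hu : u ∈ Icc (0:ℝ) 1) :
    (volume.restrict (Icc 0 u)).map (genInv (normArcLength ρ)) =
      (volume.restrict (Icc 0 (genInv (normArcLength ρ) u))).withDensity
        fun t => ENNReal.ofReal (ρ t / totalLength ρ) := by
  have hmeas := (monotone_genInv (normArcLength ρ)).measurable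
  have hle : ∀ s ∈ Icc (0:ℝ) 1,
      genInv (normArcLength ρ) s ≤ genInv (normArcLength ρ) u ↔ s ≤ u :=
    fun s hs => h.strictMonoOn_genInv.le_iff_le hs hu
  have hpre : genInv (normArcLength ρ) ⁻¹' Icc 0 (genInv (normArcLength ρ) u) ∩ Icc 0 1 =
      Icc 0 u := by
    ext s
    refine ⟨fun ⟨hs, hs01⟩ => ⟨hs01.1, (hle s hs01).1 hs.2⟩, fun hs => ?_⟩
    have hs01 : s ∈ Icc (0:ℝ) 1 := ⟨hs.1, hs.2.trans hu.2⟩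
    exact ⟨⟨(genInv_mem_Icc _ s).1, (hle s hs01).2 hs.2⟩, hs01⟩
  rw [← hpre, ← Measure.restrict_restrict (hmeas measurableSet_Icc),
    ← Measure.restrict_map hmeas measurableSet_Icc, h.map_genInv,
    restrict_withDensity measurableSet_Icc, Measure.restrict_restrict measurableSet_Icc,
    inter_eq_left.2 (Icc_subset_Icc_right (genInv_mem_Icc _ u).2)]

variable {E : Type*} [NormedAddCommGroup E] [NormedSpace ℝ E]

lemma setIntegral_comp_genInv (h : IsSpeed ρ) {w : ℝ → E}
    (hw : AEStronglyMeasurable w (volume.restrict (Icc 0 1))) {u : ℝ} (hu : u ∈ Icc (0:ℝ) 1) :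
    ∫ s in Icc 0 u, w (genInv (normArcLength ρ) s) =
      ∫ t in Icc 0 (genInv (normArcLength ρ) u), (ρ t / totalLength ρ) • w t := by
  have hmeas := (monotone_genInv (normArcLength ρ)).measurable
  have hsub : Icc 0 (genInv (normArcLength ρ) u) ⊆ Icc 0 1 :=
    Icc_subset_Icc_right (genInv_mem_Icc _ u).2
  rw [← integral_map hmeas.aemeasurable, h.map_genInv_restrict_Icc hu,
    integral_withDensity_eq_integral_toReal_smul₀
      (h.aemeasurable_density.mono_measure (Measure.restrict_mono hsub le_rfl))
      (ae_of_all _ fun _ => ENNReal.ofReal_lt_top)]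
  · simp only [h.toReal_density]
  · rw [h.map_genInv_restrict_Icc hu]
    exact (hw.mono_measure (Measure.restrict_mono hsub le_rfl)).mono_ac
      (withDensity_absolutelyContinuous _ _)

lemma integrableOn_comp_genInv (h : IsSpeed ρ) {w : ℝ → E}
    (hw : AEStronglyMeasurable w (volume.restrict (Icc 0 1)))
    (hwi : IntegrableOn (fun t => (ρ t / totalLength ρ) • w t) (Icc 0 1)) :
    IntegrableOn (fun s => w (genInv (normArcLength ρ) s)) (Icc 0 1) := by
  have hmeas := (monotone_genInv (normArcLength ρ)).measurable
  rw [IntegrableOn, ← Function.comp_def, ← integrable_map_measure _ hmeas.aemeasurable,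
    h.map_genInv, integrable_withDensity_iff_integrable_smul₀' h.aemeasurable_density
      (ae_of_all _ fun _ => ENNReal.ofReal_lt_top)]
  · simpa only [h.toReal_density] using hwi.integrable
  · rw [h.map_genInv]
    exact hw.mono_ac (withDensity_absolutelyContinuous _ _)

lemma ae_comp_genInv (h : IsSpeed ρ) {P : ℝ → Prop}
    (hP : ∀ᵐ t ∂volume.restrict (Icc 0 1), ρ t ≠ 0 → P t) :
    ∀ᵐ s ∂volume.restrict (Icc 0 1), P (genInv (normArcLength ρ) s) := by
  refine ae_of_ae_map (monotone_genInv _).measurable.aemeasurable ?_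
  rw [h.map_genInv, ae_withDensity_iff' h.aemeasurable_density]
  filter_upwards [hP] with t ht hne
  exact ht fun h0 => hne (by simp [h0])

lemma ae_hasDerivAt_genInv (h : IsSpeed ρ) :
    ∀ᵐ s ∂volume.restrict (Icc 0 1), ρ (genInv (normArcLength ρ) s) ≠ 0 ∧
      HasDerivAt (genInv (normArcLength ρ))
        (totalLength ρ / ρ (genInv (normArcLength ρ) s)) s := by
  have hσ' : ∀ᵐ t, HasDerivAt (normArcLength ρ) (ρ t / totalLength ρ) t := by
    filter_upwards [LocallyIntegrable.ae_hasDerivAt_integral h.integrable.locallyIntegrable]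
      with t ht
    exact (ht 0).div_const _
  have hcont : ∀ᵐ s, ContinuousAt (genInv (normArcLength ρ)) s := by
    filter_upwards [(monotone_genInv _).countable_not_continuousAt.ae_notMem volume] with s hs
    simpa using hs
  have hIoo : ∀ᵐ s ∂volume.restrict (Icc (0:ℝ) 1), s ∈ Ioo (0:ℝ) 1 := by
    rw [← Measure.restrict_congr_set Ioo_ae_eq_Icc]
    exact ae_restrict_mem measurableSet_Ioo
  filter_upwards [h.ae_comp_genInv
      (P := fun t => ρ t ≠ 0 ∧ HasDerivAt (normArcLength ρ) (ρ t / totalLength ρ) t)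
      (ae_restrict_of_ae (hσ'.mono fun t ht hne => ⟨hne, ht⟩)),
    ae_restrict_of_ae hcont, hIoo] with s ⟨hne, hd⟩ hc hs
  refine ⟨hne, ?_⟩
  simpa only [inv_div] using hasDerivAt_genInv h.continuous_normArcLength normArcLength_zero
    h.normArcLength_one hs hc hd (div_ne_zero hne h.totalLength_pos.ne')

end IsSpeed

/-- The derivative of `F ∘ φ` when `F' = G` and `φ = genInv (normArcLength ρ)`.
Where `ρ (φ s) = 0` the factor `L / ρ (φ s)` is `L / 0 = 0`. -/
def reparamDeriv {E : Type*} [NormedAddCommGroup E] [NormedSpace ℝ E] (ρ : ℝ → ℝ) (G : ℝ → E)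
    (s : ℝ) : E :=
  (totalLength ρ / ρ (genInv (normArcLength ρ) s)) • G (genInv (normArcLength ρ) s)

namespace IsSpeed

variable {E : Type*} [NormedAddCommGroup E] [NormedSpace ℝ E] {G : ℝ → E}

lemma aestronglyMeasurable_ratio_smul (h : IsSpeed ρ) (hG : IntegrableOn G (Icc 0 1)) :
    AEStronglyMeasurable (fun t => (totalLength ρ / ρ t) • G t) (volume.restrict (Icc 0 1)) :=
  (h.integrable.restrict.aemeasurable.const_div _).aestronglyMeasurable.smul
    hG.aestronglyMeasurable

lemma density_smul_ratio_smul_ae_eq (h : IsSpeed ρ)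
    (hG0 : ∀ᵐ t ∂volume.restrict (Icc 0 1), ρ t = 0 → G t = 0) :
    (fun t => (ρ t / totalLength ρ) • (totalLength ρ / ρ t) • G t)
      =ᵐ[volume.restrict (Icc 0 1)] G := by
  filter_upwards [hG0] with t ht
  by_cases h0 : ρ t = 0
  · simp [h0, ht h0]
  · rw [smul_smul, div_mul_div_cancel₀ h.totalLength_pos.ne', div_self h0, one_smul]

lemma integrableOn_reparamDeriv (h : IsSpeed ρ) (hG : IntegrableOn G (Icc 0 1))
    (hG0 : ∀ᵐ t ∂volume.restrict (Icc 0 1), ρ t = 0 → G t = 0) :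
    IntegrableOn (reparamDeriv ρ G) (Icc 0 1) :=
  h.integrableOn_comp_genInv (h.aestronglyMeasurable_ratio_smul hG)
    (hG.congr_fun_ae (h.density_smul_ratio_smul_ae_eq hG0).symm)

lemma integral_reparamDeriv (h : IsSpeed ρ) (hG : IntegrableOn G (Icc 0 1))
    (hG0 : ∀ᵐ t ∂volume.restrict (Icc 0 1), ρ t = 0 → G t = 0) {u : ℝ} (hu : u ∈ Icc (0:ℝ) 1) :
    ∫ s in (0:ℝ)..u, reparamDeriv ρ G s = ∫ t in (0:ℝ)..genInv (normArcLength ρ) u, G t := by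
  have hφu := genInv_mem_Icc (normArcLength ρ) u
  rw [intervalIntegral.integral_of_le hu.1, intervalIntegral.integral_of_le hφu.1,
    ← integral_Icc_eq_integral_Ioc, ← integral_Icc_eq_integral_Ioc]
  exact (h.setIntegral_comp_genInv (h.aestronglyMeasurable_ratio_smul hG) hu).trans
    (integral_congr_ae (ae_restrict_of_ae_restrict_of_subset (Icc_subset_Icc_right hφu.2)
      (h.density_smul_ratio_smul_ae_eq hG0)))

lemma isACDeriv_comp_genInv (h : IsSpeed ρ) {F : ℝ → E} (hF : IsACDeriv F G)
    (hG0 : ∀ᵐ t ∂volume.restrict (Icc 0 1), ρ t = 0 → G t = 0) :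
    IsACDeriv (fun s => F (genInv (normArcLength ρ) s)) (reparamDeriv ρ G) := by
  have hG := hF.integrableOn
  refine ⟨(intervalIntegrable_iff_integrableOn_Icc_of_le zero_le_one).2
    (h.integrableOn_reparamDeriv hG hG0), fun u hu => ?_⟩
  -- `genInv _ 0` is positive when `ρ` vanishes near `0`, but `G` has integral `0` up to it
  have h0 := h.integral_reparamDeriv hG hG0 (left_mem_Icc.2 zero_le_one)
  rw [intervalIntegral.integral_same] at h0
  dsimp only
  rw [hF.2 _ (genInv_mem_Icc _ u), hF.2 _ (genInv_mem_Icc _ 0), h.integral_reparamDeriv hG hG0 hu,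
    ← h0, add_zero]

lemma ae_norm_reparamDeriv (h : IsSpeed ρ) (hρG : ∀ t ∈ Icc (0:ℝ) 1, ρ t = ‖G t‖) :
    ∀ᵐ s ∂volume.restrict (Icc 0 1), ‖reparamDeriv ρ G s‖ = totalLength ρ := by
  filter_upwards [h.ae_comp_genInv (P := fun t => ρ t ≠ 0) (ae_of_all _ fun _ => id)] with s hs
  rw [reparamDeriv, norm_smul, Real.norm_of_nonneg (div_nonneg h.totalLength_pos.le (h.nonneg _)),
    ← hρG _ (genInv_mem_Icc _ s), div_mul_cancel₀ _ hs]

lemma integral_hext_reparamDeriv (h : IsSpeed ρ) {d : ℕ} {g : ℝ → Euc d}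
    (hg : IntegrableOn g (Icc 0 1)) (hg0 : ∀ᵐ t ∂volume.restrict (Icc 0 1), ρ t = 0 → g t = 0)
    {f : Proj d → ℝ} (hf : Continuous f) :
    ∫ s in (0:ℝ)..1, hext f (reparamDeriv ρ g s) = ∫ t in (0:ℝ)..1, hext f (g t) := by
  calc ∫ s in (0:ℝ)..1, hext f (reparamDeriv ρ g s)
      = ∫ s in (0:ℝ)..1, reparamDeriv ρ (fun t => hext f (g t)) s :=
        intervalIntegral.integral_congr fun s _ =>
          hext_smul_of_nonneg _ (div_nonneg h.totalLength_pos.le (h.nonneg _))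
    _ = ∫ t in (0:ℝ)..1, hext f (g t) := by
        rw [h.integral_reparamDeriv (hg.hext_comp hf)
          (hg0.mono fun t ht h0 => by rw [ht h0, hext_zero]) ⟨zero_le_one, le_rfl⟩, h.genInv_one]

end IsSpeed

end ArcLength

section SpeedOfCurve

variable {E : Type*} [NormedAddCommGroup E] {g : ℝ → E}

lemma totalLength_indicator_norm :
    totalLength ((Icc (0:ℝ) 1).indicator fun t => ‖g t‖) = ∫ t in (0:ℝ)..1, ‖g t‖ :=
  intervalIntegral.integral_congr fun _ ht =>
    indicator_of_mem (by rwa [uIcc_of_le zero_le_one] at ht) _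

lemma isSpeed_indicator_norm (hg : IntegrableOn g (Icc 0 1))
    (hL : 0 < ∫ t in (0:ℝ)..1, ‖g t‖) : IsSpeed ((Icc (0:ℝ) 1).indicator fun t => ‖g t‖) where
  nonneg := indicator_nonneg fun t _ => norm_nonneg (g t)
  integrable := IntegrableOn.integrable_indicator hg.norm measurableSet_Icc
  totalLength_pos := totalLength_indicator_norm (g := g) ▸ hL

lemma ae_indicator_norm_eq_zero_imp {F : Type*} [Zero F] {G : ℝ → F}
    (hG : ∀ᵐ t ∂volume.restrict (Icc 0 1), g t = 0 → G t = 0) :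
    ∀ᵐ t ∂volume.restrict (Icc 0 1), (Icc (0:ℝ) 1).indicator (fun t => ‖g t‖) t = 0 → G t = 0 := by
  filter_upwards [hG, ae_restrict_mem measurableSet_Icc] with t hG ht h0
  exact hG (norm_eq_zero.1 (by rwa [indicator_of_mem ht] at h0))

lemma ae_eq_zero_of_integral_norm_eq_zero (hg : IntervalIntegrable g volume 0 1)
    (h : ∫ t in (0:ℝ)..1, ‖g t‖ = 0) : ∀ᵐ t ∂volume.restrict (Icc 0 1), g t = 0 := by
  rw [← Measure.restrict_congr_set Ioc_ae_eq_Icc]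
  filter_upwards [(intervalIntegral.integral_eq_zero_iff_of_le_of_nonneg_ae zero_le_one
    (ae_of_all _ fun t => norm_nonneg (g t)) hg.norm).1 h] with t ht
  exact norm_eq_zero.1 ht

end SpeedOfCurve

theorem stmt19_general {d : ℕ} (α g : ℝ → Euc d) (hα : IsACDeriv α g) :
    ∃ φ : ℝ → ℝ,
      StrictMonoOn φ (Icc 0 1) ∧
      MapsTo φ (Icc 0 1) (Icc 0 1) ∧
      (∀ s ∈ Icc (0:ℝ) 1, ContinuousWithinAt φ (Ici s) s) ∧
      -- (i)
      (∀ (k : ℕ) (F G : ℝ → Euc k), IsACDeriv F G →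
        (∀ᵐ t ∂volume.restrict (Icc (0:ℝ) 1), g t = 0 → G t = 0) →
        ∃ H : ℝ → Euc k, IsACDeriv (fun s => F (φ s)) H) ∧
      ∃ h : ℝ → Euc d, IsACDeriv (fun s => α (φ s)) h ∧
        -- (ii)
        (∀ᵐ s ∂volume.restrict (Icc (0:ℝ) 1),
          ∃ D : ℝ, HasDerivAt φ D s ∧ h s = D • g (φ s) ∧
            ‖h s‖ = ∫ t in (0:ℝ)..1, ‖g t‖) ∧
        -- (iii)
        (∀ (μ μ' : Measure (Proj d)),
          IsCurveMeasure g μ → IsCurveMeasure h μ' → μ' = μ) ∧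
        (∫ s in (0:ℝ)..1, ‖h s‖) = ∫ t in (0:ℝ)..1, ‖g t‖ := by
  rcases (intervalIntegral.integral_nonneg zero_le_one fun t _ => norm_nonneg (g t)).eq_or_lt
    with hL | hL
  · refine ⟨id, strictMonoOn_id, mapsTo_id _, fun _ _ => continuousWithinAt_id,
      fun _ _ G hF _ => ⟨G, hF⟩, g, hα, ?_, fun _ _ hμ hμ' => hμ.eq_of_integral_hext_eq hμ'
      fun _ _ => rfl, rfl⟩
    filter_upwards [ae_eq_zero_of_integral_norm_eq_zero hα.1 hL.symm] with s hs
    exact ⟨1, hasDerivAt_id s, (one_smul _ _).symm, by rw [hs, norm_zero]; exact hL⟩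
  set ρ := (Icc (0:ℝ) 1).indicator fun t => ‖g t‖
  have hρ : IsSpeed ρ := isSpeed_indicator_norm hα.integrableOn hL
  have hg0 : ∀ᵐ t ∂volume.restrict (Icc (0:ℝ) 1), ρ t = 0 → g t = 0 :=
    ae_indicator_norm_eq_zero_imp (ae_of_all _ fun _ => id)
  have hspeed : ∀ᵐ s ∂volume.restrict (Icc (0:ℝ) 1),
      ‖reparamDeriv ρ g s‖ = ∫ t in (0:ℝ)..1, ‖g t‖ := by
    rw [← (totalLength_indicator_norm : totalLength ρ = _)]
    exact hρ.ae_norm_reparamDeriv fun t ht => indicator_of_mem ht _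
  refine ⟨genInv (normArcLength ρ), hρ.strictMonoOn_genInv, fun u _ => genInv_mem_Icc _ u,
    fun s _ => continuousWithinAt_Ici_genInv _ s,
    fun k F G hF hG => ⟨_, hρ.isACDeriv_comp_genInv hF (ae_indicator_norm_eq_zero_imp hG)⟩,
    reparamDeriv ρ g, hρ.isACDeriv_comp_genInv hα hg0, ?_,
    fun μ μ' hμ hμ' => hμ.eq_of_integral_hext_eq hμ' fun f hf =>
      hρ.integral_hext_reparamDeriv hα.integrableOn hg0 hf, ?_⟩
  · filter_upwards [hρ.ae_hasDerivAt_genInv, hspeed] with s hs hs'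
    exact ⟨_, hs.2, rfl, hs'⟩
  · rw [intervalIntegral.integral_of_le zero_le_one,
      integral_congr_ae (ae_restrict_of_ae_restrict_of_subset Ioc_subset_Icc_self hspeed)]
    simp

/-- (Constant speed reparametrization.)  Let
`α : [0,1] → ℝ^d` be absolutely continuous.  There exists a right-continuous,
strictly monotonic `φ̃ : [0,1] → [0,1]` such that:
(i) for every absolutely continuous `F : [0,1] → ℝ^k` whose derivative
vanishes (a.e.) wherever `α'` does, `F ∘ φ̃` is absolutely continuous — in
particular `α ∘ φ̃` is absolutely continuous;
(ii) for a.e. `s`, the chain rule `(α∘φ̃)'(s) = α'(φ̃(s)) φ̃'(s)` holds and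
`|(α∘φ̃)'(s)| = ‖α‖_AC` (constant speed);
(iii) `μ_{α∘φ̃} = μ_α`, and in particular `‖α∘φ̃‖_AC = ‖α‖_AC`. -/
theorem stmt19 {d : ℕ} (hd : 1 ≤ d) (α g : ℝ → Euc d) (hα : IsACDeriv α g) :
    ∃ φ : ℝ → ℝ,
      StrictMonoOn φ (Icc 0 1) ∧
      MapsTo φ (Icc 0 1) (Icc 0 1) ∧
      (∀ s ∈ Icc (0:ℝ) 1, ContinuousWithinAt φ (Ici s) s) ∧
      -- (i)
      (∀ (k : ℕ) (F G : ℝ → Euc k), IsACDeriv F G →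
        (∀ᵐ t ∂volume.restrict (Icc (0:ℝ) 1), g t = 0 → G t = 0) →
        ∃ H : ℝ → Euc k, IsACDeriv (fun s => F (φ s)) H) ∧
      ∃ h : ℝ → Euc d, IsACDeriv (fun s => α (φ s)) h ∧
        -- (ii)
        (∀ᵐ s ∂volume.restrict (Icc (0:ℝ) 1),
          ∃ D : ℝ, HasDerivAt φ D s ∧ h s = D • g (φ s) ∧
            ‖h s‖ = ∫ t in (0:ℝ)..1, ‖g t‖) ∧
        -- (iii)
        (∀ (μ μ' : Measure (Proj d)),
          IsCurveMeasure g μ → IsCurveMeasure h μ' → μ' = μ) ∧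
        (∫ s in (0:ℝ)..1, ‖h s‖) = ∫ t in (0:ℝ)..1, ‖g t‖ :=
  stmt19_general α g hα
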